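/- Let Φ be a unital positive linear map on B(H) and let A, B be positive definite operators with R = R(A,B) = max{r(A⁻¹B), r(B⁻¹A)}. Then ((1+R²)²/(4R))·Φ(B)Φ(A)⁻¹Φ(B) ≥ Φ(BA⁻¹B). -/

import Mathlib

set_option synthInstance.maxHeartbeats 400000
set_option maxHeartbeats 800000

open scoped NNReal ENNReal
open ContinuousLinearMap Filter

variable {H : Type*} [NormedAddCommGroup H] [InnerProductSpace ℂ H] [CompleteSpace H]

/-- A bounded operator is positive definite: positive (semi-definite) and invertible. -/
def IsPosDef (A : H →L[ℂ] H) : Prop := A.IsPositive ∧ IsUnit A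

/-- `R(A,B) = max {r(A⁻¹B), r(B⁻¹A)}` where `r` is the spectral radius. -/
noncomputable def Rdist (A B : H →L[ℂ] H) : ℝ :=
  max (spectralRadius ℂ (Ring.inverse A * B)).toReal
    (spectralRadius ℂ (Ring.inverse B * A)).toReal

/-!
Write `x = B^{-1/2} A B^{-1/2}`. The nonzero spectrum of `x` is that of `B⁻¹A` and the nonzero
spectrum of `x⁻¹` is that of `A⁻¹B`, so `σ(x) ⊆ [R⁻¹, R]`, hence `R ≥ 1` and
`x + x⁻¹ ≤ R + R⁻¹`. Conjugating by `B^{1/2}` gives `A + BA⁻¹B ≤ (R + R⁻¹) B`, which `Φ`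
preserves. The operator AM–GM inequality `c Q ≤ (c²/4) Q P⁻¹ Q + P`, which expresses
`((c/2) Q - P) P⁻¹ ((c/2) Q - P) ≥ 0`, with `P = Φ(A)`, `Q = Φ(B)`, `c = R + R⁻¹` then bounds
`Φ(BA⁻¹B)` by `((R + R⁻¹)²/4) Φ(B)Φ(A)⁻¹Φ(B)`, and `(R + R⁻¹)²/4 ≤ (1 + R²)²/(4R)` as `R ≥ 1`.
-/

open CFC
open scoped Ring

lemma add_inv_le_add_inv_of_mem_Icc {r t : ℝ} (ht : t ∈ Set.Icc r⁻¹ r) (ht₀ : 0 < t) :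
    t + t⁻¹ ≤ r + r⁻¹ := by
  obtain ⟨hlo, hhi⟩ := ht
  have hr : 0 < r := ht₀.trans_le hhi
  have hrt : 1 ≤ r * t := by
    simpa [hr.ne'] using mul_le_mul_of_nonneg_left hlo hr.le
  have hdiff : r + r⁻¹ - (t + t⁻¹) = (r - t) * (r * t - 1) / (r * t) := by
    field_simp
    ring
  rw [← sub_nonneg, hdiff]
  exact div_nonneg (mul_nonneg (sub_nonneg.2 hhi) (sub_nonneg.2 hrt)) (by positivity)

lemma one_le_of_mem_Icc_inv {r t : ℝ} (ht : t ∈ Set.Icc r⁻¹ r) (ht₀ : 0 < t) : 1 ≤ r := by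
  have hr : 0 < r := ht₀.trans_le ht.2
  by_contra! hlt
  linarith [ht.1.trans ht.2, (one_lt_inv₀ hr).2 hlt]

lemma norm_le_toReal_spectralRadius {𝕜 A : Type*} [NormedField 𝕜] [NormedRing A]
    [NormedAlgebra 𝕜 A] [CompleteSpace A] [NormOneClass A] {a : A} {z : 𝕜}
    (hz : z ∈ spectrum 𝕜 a) : ‖z‖ ≤ (spectralRadius 𝕜 a).toReal := by
  have hfin : spectralRadius 𝕜 a ≠ ⊤ :=
    ((spectrum.spectralRadius_le_nnnorm a).trans_lt ENNReal.coe_lt_top).ne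
  simpa using ENNReal.toReal_mono hfin (le_iSup₂ (f := fun k _ => (‖k‖₊ : ℝ≥0∞)) z hz)

lemma spectrum.inv_mem_inverse {R A : Type*} [Field R] [Ring A] [Algebra R A] {a : A}
    (ha : IsUnit a) {t : R} (ht : t ∈ spectrum R a) : t⁻¹ ∈ spectrum R a⁻¹ʳ := by
  lift a to Aˣ using ha
  rw [Ring.inverse_unit]
  simpa using (spectrum.inv_mem_iff (r := Units.mk0 t (spectrum.ne_zero_of_mem_of_unit ht))).mp ht

section CStarAlgebra

variable {𝒜 : Type*} [CStarAlgebra 𝒜]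

lemma le_toReal_spectralRadius_of_mem [Nontrivial 𝒜] {x c : 𝒜} {t : ℝ} (ht₀ : 0 < t)
    (ht : t ∈ spectrum ℝ x) (hxc : spectrum ℂ x \ {0} = spectrum ℂ c \ {0}) :
    t ≤ (spectralRadius ℂ c).toReal := by
  have htC : (t : ℂ) ∈ spectrum ℂ c \ {0} :=
    hxc ▸ ⟨spectrum.algebraMap_mem ℂ ht, by simpa using ht₀.ne'⟩
  simpa [abs_of_pos ht₀] using norm_le_toReal_spectralRadius htC.1

variable [PartialOrder 𝒜] [StarOrderedRing 𝒜]

lemma CFC.spectrum_conjSqrt_diff_zero (c a : 𝒜) (hc : 0 ≤ c) :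
    spectrum ℂ (conjSqrt c a) \ {0} = spectrum ℂ (c * a) \ {0} := by
  rw [conjSqrt_apply, spectrum.nonzero_mul_comm, ← mul_assoc, sqrt_mul_sqrt_self c hc]

lemma CFC.conjSqrt_conjSqrt (c a : 𝒜) (hc : 0 ≤ c) : conjSqrt c (conjSqrt c a) = c * a * c := by
  simp only [conjSqrt_apply, mul_assoc, sqrt_mul_sqrt_self c hc]
  simp only [← mul_assoc, sqrt_mul_sqrt_self c hc]

lemma add_ringInverse_le_of_spectrum_subset_Icc {x : 𝒜} (hx : IsSelfAdjoint x) {r : ℝ}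
    (hspec : spectrum ℝ x ⊆ Set.Icc r⁻¹ r) (hpos : ∀ t ∈ spectrum ℝ x, 0 < t) :
    x + x⁻¹ʳ ≤ algebraMap ℝ 𝒜 (r + r⁻¹) := by
  have hunit : IsUnit x := (spectrum.zero_notMem_iff ℝ).1 fun h0 => (hpos 0 h0).false
  have hinv : ContinuousOn (fun t : ℝ => t⁻¹) (spectrum ℝ x) :=
    continuousOn_inv₀.mono fun t ht => (hpos t ht).ne'
  calc x + x⁻¹ʳ = cfc (fun t : ℝ => t + t⁻¹) x := by
        rw [cfc_add x (fun t => t) (fun t => t⁻¹), cfc_id' ℝ x, cfc_ringInverse_id x hunit]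
    _ ≤ cfc (fun _ : ℝ => r + r⁻¹) x :=
        cfc_mono fun t ht => add_inv_le_add_inv_of_mem_Icc (hspec ht) (hpos t ht)
    _ = algebraMap ℝ 𝒜 (r + r⁻¹) := cfc_const (r + r⁻¹) x

lemma spectrum_conjSqrt_ringInverse_subset_Icc [Nontrivial 𝒜] {a b : 𝒜}
    (ha : IsStrictlyPositive a) (hb : IsStrictlyPositive b) {r : ℝ}
    (h₁ : (spectralRadius ℂ (b⁻¹ʳ * a)).toReal ≤ r)
    (h₂ : (spectralRadius ℂ (a⁻¹ʳ * b)).toReal ≤ r) :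
    spectrum ℝ (conjSqrt b⁻¹ʳ a) ⊆ Set.Icc r⁻¹ r := by
  intro t ht
  have hx : IsStrictlyPositive (conjSqrt b⁻¹ʳ a) :=
    (isStrictlyPositive_conjSqrt_iff _ _ hb.ringInverse).2 ha
  have ht₀ : 0 < t := hx.spectrum_pos ht
  have hle : t ≤ r := (le_toReal_spectralRadius_of_mem ht₀ ht
    (spectrum_conjSqrt_diff_zero _ _ hb.ringInverse.nonneg)).trans h₁
  have hinv_le : t⁻¹ ≤ r := by
    refine (le_toReal_spectralRadius_of_mem (inv_pos.2 ht₀)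
      (spectrum.inv_mem_inverse hx.isUnit ht) ?_).trans h₂
    rw [ringInverse_conjSqrt _ _ hb.ringInverse, Ring.inverse_inverse hb.isUnit,
      spectrum_conjSqrt_diff_zero _ _ hb.nonneg, spectrum.nonzero_mul_comm]
  exact ⟨(inv_le_comm₀ ht₀ (ht₀.trans_le hle)).1 hinv_le, hle⟩

lemma one_le_of_spectralRadius_le [Nontrivial 𝒜] {a b : 𝒜}
    (ha : IsStrictlyPositive a) (hb : IsStrictlyPositive b) {r : ℝ}
    (h₁ : (spectralRadius ℂ (b⁻¹ʳ * a)).toReal ≤ r)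
    (h₂ : (spectralRadius ℂ (a⁻¹ʳ * b)).toReal ≤ r) :
    1 ≤ r := by
  have hx : IsStrictlyPositive (conjSqrt b⁻¹ʳ a) :=
    (isStrictlyPositive_conjSqrt_iff _ _ hb.ringInverse).2 ha
  obtain ⟨t, ht⟩ :=
    ContinuousFunctionalCalculus.spectrum_nonempty (R := ℝ) (conjSqrt b⁻¹ʳ a) hx.isSelfAdjoint
  exact one_le_of_mem_Icc_inv (spectrum_conjSqrt_ringInverse_subset_Icc ha hb h₁ h₂ ht)
    (hx.spectrum_pos ht)

lemma add_mul_ringInverse_mul_le [Nontrivial 𝒜] {a b : 𝒜}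
    (ha : IsStrictlyPositive a) (hb : IsStrictlyPositive b) {r : ℝ}
    (h₁ : (spectralRadius ℂ (b⁻¹ʳ * a)).toReal ≤ r)
    (h₂ : (spectralRadius ℂ (a⁻¹ʳ * b)).toReal ≤ r) :
    a + b * a⁻¹ʳ * b ≤ (r + r⁻¹) • b := by
  have hx : IsStrictlyPositive (conjSqrt b⁻¹ʳ a) :=
    (isStrictlyPositive_conjSqrt_iff _ _ hb.ringInverse).2 ha
  have key := conjSqrt_le_conjSqrt (c := b) <| add_ringInverse_le_of_spectrum_subset_Icc
    hx.isSelfAdjoint (spectrum_conjSqrt_ringInverse_subset_Icc ha hb h₁ h₂) fun t ht =>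
      hx.spectrum_pos ht
  rwa [map_add, conjSqrt_conjSqrt_ringInverse _ _ hb, ringInverse_conjSqrt _ _ hb.ringInverse,
    Ring.inverse_inverse hb.isUnit, conjSqrt_conjSqrt _ _ hb.nonneg, Algebra.algebraMap_eq_smul_one,
    map_smul, conjSqrt_one _ hb.nonneg] at key

lemma smul_le_smul_mul_ringInverse_mul_add {p q : 𝒜} (hp : IsStrictlyPositive p)
    (hq : IsSelfAdjoint q) (c : ℝ) : c • q ≤ (c ^ 2 / 4) • (q * p⁻¹ʳ * q) + p := by
  set y := (c / 2) • q - p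
  have hy : IsSelfAdjoint y := ((IsSelfAdjoint.all (c / 2)).smul hq).sub hp.isSelfAdjoint
  have h := star_left_conjugate_nonneg hp.ringInverse.nonneg y
  have expand : y * p⁻¹ʳ * y = (c ^ 2 / 4) • (q * p⁻¹ʳ * q) + p - c • q := by
    have hpp : p * p⁻¹ʳ = 1 := Ring.mul_inverse_cancel p hp.isUnit
    have hpp' : p⁻¹ʳ * p = 1 := Ring.inverse_mul_cancel p hp.isUnit
    simp only [y, sub_mul, mul_sub, smul_mul_assoc, mul_smul_comm, smul_sub, mul_assoc, hpp, hpp',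
      one_mul, mul_one]
    module
  rwa [hy.star_eq, expand, sub_nonneg] at h

end CStarAlgebra

section PositiveLinearMap

variable {𝒜 ℬ : Type*} [CStarAlgebra 𝒜] [PartialOrder 𝒜] [StarOrderedRing 𝒜]
  [CStarAlgebra ℬ] [PartialOrder ℬ] [StarOrderedRing ℬ] (f : 𝒜 →ₚ[ℂ] ℬ)

lemma PositiveLinearMap.isStrictlyPositive_map [Nontrivial 𝒜] (hf : f 1 = 1) {a : 𝒜}
    (ha : IsStrictlyPositive a) : IsStrictlyPositive (f a) := by
  obtain ⟨m, hm, hle⟩ := (CFC.exists_pos_algebraMap_le_iff ha.isSelfAdjoint).2 fun _ ht =>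
    ha.spectrum_pos ht
  have hfm : f (algebraMap ℝ 𝒜 m) = algebraMap ℝ ℬ m := by
    rw [Algebra.algebraMap_eq_smul_one, map_smul_of_tower, hf, Algebra.algebraMap_eq_smul_one]
  exact (isStrictlyPositive_algebraMap hm).of_le (hfm ▸ OrderHomClass.mono f hle)

theorem PositiveLinearMap.map_mul_ringInverse_mul_le [Nontrivial 𝒜] (hf : f 1 = 1) {a b : 𝒜}
    (ha : IsStrictlyPositive a) (hb : IsStrictlyPositive b) {r : ℝ}
    (h₁ : (spectralRadius ℂ (b⁻¹ʳ * a)).toReal ≤ r)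
    (h₂ : (spectralRadius ℂ (a⁻¹ʳ * b)).toReal ≤ r) :
    f (b * a⁻¹ʳ * b) ≤ ((1 + r ^ 2) ^ 2 / (4 * r)) • (f b * (f a)⁻¹ʳ * f b) := by
  have hr : 1 ≤ r := one_le_of_spectralRadius_le ha hb h₁ h₂
  have hfa : IsStrictlyPositive (f a) := f.isStrictlyPositive_map hf ha
  have hfb : IsSelfAdjoint (f b) := (f.map_nonneg hb.nonneg).isSelfAdjoint
  have hmap : f a + f (b * a⁻¹ʳ * b) ≤ (r + r⁻¹) • f b := by
    simpa only [map_add, map_smul_of_tower] using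
      OrderHomClass.mono f (add_mul_ringInverse_mul_le ha hb h₁ h₂)
  have hQ : 0 ≤ f b * (f a)⁻¹ʳ * f b := by
    simpa only [hfb.star_eq] using star_left_conjugate_nonneg hfa.ringInverse.nonneg (f b)
  have hcoef : (r + r⁻¹) ^ 2 / 4 ≤ (1 + r ^ 2) ^ 2 / (4 * r) := by
    have hr₀ : 0 < r := zero_lt_one.trans_le hr
    rw [div_le_div_iff₀ (by norm_num) (by positivity)]
    field_simp
    nlinarith [sq_nonneg (1 + r ^ 2)]
  calc f (b * a⁻¹ʳ * b) ≤ (r + r⁻¹) • f b - f a := le_sub_iff_add_le'.2 hmap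
    _ ≤ ((r + r⁻¹) ^ 2 / 4) • (f b * (f a)⁻¹ʳ * f b) :=
        sub_le_iff_le_add.2 (smul_le_smul_mul_ringInverse_mul_add hfa hfb _)
    _ ≤ ((1 + r ^ 2) ^ 2 / (4 * r)) • (f b * (f a)⁻¹ʳ * f b) :=
        smul_le_smul_of_nonneg_right hcoef hQ

end PositiveLinearMap

lemma IsPosDef.isStrictlyPositive {E : Type*} [NormedAddCommGroup E] [InnerProductSpace ℂ E]
    {A : E →L[ℂ] E} (hA : IsPosDef A) : IsStrictlyPositive A :=
  IsStrictlyPositive.iff_of_unital.2 ⟨(nonneg_iff_isPositive A).2 hA.1, hA.2⟩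

/-- `Φ(B A⁻¹ B) ≤ ((1+R²)²/(4R)) • Φ(B) Φ(A)⁻¹ Φ(B)` where `R = R(A,B)`. -/
theorem stmt_6 (Φ : (H →L[ℂ] H) →ₗ[ℂ] (H →L[ℂ] H))
    (hΦ1 : Φ 1 = 1) (hΦpos : ∀ T : H →L[ℂ] H, 0 ≤ T → 0 ≤ Φ T)
    (A B : H →L[ℂ] H) (hA : IsPosDef A) (hB : IsPosDef B) :
    Φ (B * Ring.inverse A * B) ≤
      ((1 + (Rdist A B) ^ 2) ^ 2 / (4 * Rdist A B)) •
        (Φ B * Ring.inverse (Φ A) * Φ B) := by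
  nontriviality (H →L[ℂ] H)
  exact (PositiveLinearMap.mk₀ Φ hΦpos).map_mul_ringInverse_mul_le hΦ1 hA.isStrictlyPositive
    hB.isStrictlyPositive (le_max_right _ _) (le_max_left _ _)
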